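/- Define f(x) := (1 + x)/(1 − x) for x ∈ [0, 1). If S(β) := 1 − ‖p(β)‖² is the linear entropy of the Gibbs probability vector p(β) with components p_j(β) = e^{−βE_j}/Z(β), then β ↦ ‖p(β)‖² = Z(2β)/Z(β)² is monotonically nondecreasing in β ≥ 0, and hence β ↦ (1 + S(β))/(1 − S(β)) is monotonically nonincreasing in β ≥ 0. -/

import Mathlib

open Finset

private lemma gibbs_key' {d : ℕ} (E a : Fin d → ℝ) (ha : ∀ j, 0 ≤ a j)
    (hmono : ∀ j k, E j ≤ E k → a k ≤ a j) :
    0 ≤ ∑ j, ∑ k, a j ^ 2 * a k * (E k - E j) := by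
  have hswap : ∑ j, ∑ k, a j ^ 2 * a k * (E k - E j)
      = ∑ j, ∑ k, a k ^ 2 * a j * (E j - E k) := Finset.sum_comm
  have h2 : 2 * ∑ j, ∑ k, a j ^ 2 * a k * (E k - E j)
      = ∑ j, ∑ k, (a j * a k) * ((E k - E j) * (a j - a k)) := by
    rw [two_mul]
    nth_rewrite 2 [hswap]
    rw [← Finset.sum_add_distrib]
    refine Finset.sum_congr rfl fun j _ => ?_
    rw [← Finset.sum_add_distrib]
    exact Finset.sum_congr rfl fun k _ => by ring
  have hterm : 0 ≤ ∑ j, ∑ k, (a j * a k) * ((E k - E j) * (a j - a k)) := by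
    refine Finset.sum_nonneg fun j _ => Finset.sum_nonneg fun k _ => ?_
    refine mul_nonneg (mul_nonneg (ha j) (ha k)) ?_
    rcases le_total (E j) (E k) with h | h
    · exact mul_nonneg (by linarith) (by have := hmono j k h; linarith)
    · nlinarith [hmono k j h]
  linarith

private lemma gibbs_key {d : ℕ} (E : Fin d → ℝ) {β : ℝ} (hβ : 0 ≤ β) :
    0 ≤ (∑ j, -E j * Real.exp (-(2 * β) * E j)) * (∑ j, Real.exp (-β * E j))
      - (∑ j, Real.exp (-(2 * β) * E j)) * (∑ j, -E j * Real.exp (-β * E j)) := by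
  set a : Fin d → ℝ := fun j => Real.exp (-β * E j) with ha_def
  have hsq : ∀ j, Real.exp (-(2 * β) * E j) = a j ^ 2 := by
    intro j
    rw [sq, ← Real.exp_add]
    congr 1; ring
  have key := gibbs_key' E a (fun j => (Real.exp_pos _).le)
    (fun j k h => Real.exp_le_exp.2 (by nlinarith))
  calc (0:ℝ) ≤ ∑ j, ∑ k, a j ^ 2 * a k * (E k - E j) := key
    _ = _ := by
        simp only [hsq, Finset.sum_mul_sum, ← Finset.sum_sub_distrib]
        refine Finset.sum_congr rfl fun j _ => Finset.sum_congr rfl fun k _ => by ring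

/-- The purity `‖p(β)²‖ = Z(2β)/Z(β)²` of the Gibbs probability vector is monotonically
nondecreasing in `β ≥ 0`, and hence `(1 + S(β))/(1 − S(β))` with `S(β) = 1 − ‖p(β)‖²`
the linear entropy is monotonically nonincreasing in `β ≥ 0`. -/
theorem gibbs_purity_monotone {d : ℕ} (hd : 0 < d) (E : Fin d → ℝ)
    (Z : ℝ → ℝ) (hZ : ∀ β, Z β = ∑ j, Real.exp (-β * E j))
    (p : ℝ → Fin d → ℝ) (hp : ∀ β j, p β j = Real.exp (-β * E j) / Z β)
    (P S : ℝ → ℝ) (hP : ∀ β, P β = ∑ j, (p β j) ^ 2) (hS : ∀ β, S β = 1 - P β) :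
    (∀ β, P β = Z (2 * β) / (Z β) ^ 2) ∧
      MonotoneOn P (Set.Ici (0 : ℝ)) ∧
      AntitoneOn (fun β => (1 + S β) / (1 - S β)) (Set.Ici (0 : ℝ)) := by
  have hne : (Finset.univ : Finset (Fin d)).Nonempty := ⟨⟨0, hd⟩, Finset.mem_univ _⟩
  set F : ℝ → ℝ := fun x => ∑ j, Real.exp (-x * E j) with hF_def
  set F' : ℝ → ℝ := fun x => ∑ j, -E j * Real.exp (-x * E j) with hF'_def
  have hFpos : ∀ x, 0 < F x := fun x =>
    Finset.sum_pos (fun j _ => Real.exp_pos _) hne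
  have hFderiv : ∀ x, HasDerivAt F (F' x) x := by
    intro x
    refine HasDerivAt.fun_sum fun j _ => ?_
    have h1 : HasDerivAt (fun x : ℝ => -x * E j) (-1 * E j) x :=
      (hasDerivAt_id x).neg.mul_const (E j)
    have h2 := h1.exp
    exact h2.congr_deriv (by ring)
  -- Part 1
  have part1 : ∀ β, P β = Z (2 * β) / (Z β) ^ 2 := by
    intro β
    rw [hP, hZ (2 * β), hZ β, Finset.sum_div]
    refine Finset.sum_congr rfl fun j _ => ?_
    rw [hp, div_pow, hZ β]
    congr 1
    rw [sq, ← Real.exp_add]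
    congr 1; ring
  have hPF : P = fun β => F (2 * β) / (F β) ^ 2 := by
    funext β
    rw [part1, hZ, hZ]
  -- derivative of the purity
  have hPderiv : ∀ β, HasDerivAt (fun β => F (2 * β) / (F β) ^ 2)
      ((2 * F' (2 * β) * (F β) ^ 2 - F (2 * β) * (2 * F β ^ 1 * F' β)) / ((F β) ^ 2) ^ 2) β := by
    intro β
    have hG : HasDerivAt (fun β : ℝ => F (2 * β)) (2 * F' (2 * β)) β := by
      have := (hFderiv (2 * β)).comp β ((hasDerivAt_id β).const_mul 2)
      exact this.congr_deriv (by ring)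
    have hpow : HasDerivAt (fun β : ℝ => (F β) ^ 2) (2 * F β ^ 1 * F' β) β := by
      have := (hFderiv β).pow 2
      norm_num at this
      exact this.congr_deriv (by ring)
    exact hG.div hpow (by positivity)
  have mono : MonotoneOn P (Set.Ici (0 : ℝ)) := by
    rw [hPF]
    apply monotoneOn_of_deriv_nonneg (convex_Ici 0)
    · exact (Differentiable.continuous fun x => (hPderiv x).differentiableAt).continuousOn
    · exact fun x _ => (hPderiv x).differentiableAt.differentiableWithinAt
    · intro x hx
      rw [interior_Ici] at hx
      rw [(hPderiv x).deriv]
      apply div_nonneg _ (by positivity)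
      have hkey := gibbs_key E (le_of_lt hx)
      have hFx := hFpos x
      rw [hF_def, hF'_def]
      simp only []
      nlinarith [hkey, hFx]
  refine ⟨part1, mono, ?_⟩
  have hPpos : ∀ β, 0 < P β := by
    intro β
    rw [hPF]
    exact div_pos (hFpos _) (by positivity)
  intro a ha b hb hab
  have e1 : ∀ β, 1 - S β = P β := fun β => by rw [hS]; ring
  have e2 : ∀ β, 1 + S β = 2 - P β := fun β => by rw [hS]; ring
  simp only [e1, e2]
  rw [div_le_div_iff₀ (hPpos b) (hPpos a)]
  nlinarith [mono ha hb hab, hPpos a, hPpos b]
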